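/- Let G be a finite group acting on a free R-module A (R a commutative ring with no |G|-torsion) that admits a basis permuted by the action of G (a permutation module). Then Ĥ^{-1}(G,A) = Ker(Nr)/⟨ga - a⟩ vanishes, where Nr(a) = Σ_{g∈G} g·a. -/

import Mathlib

open Finset

private lemma smul_mem_closure_aux
    {R M G : Type*} [CommRing R] [AddCommGroup M] [Module R M]
    [Group G] [DistribMulAction G M] [SMulCommClass G R M]
    (r : R) {x : M}
    (hx : x ∈ AddSubgroup.closure {x : M | ∃ (g : G) (m : M), x = g • m - m}) :
    r • x ∈ AddSubgroup.closure {x : M | ∃ (g : G) (m : M), x = g • m - m} := by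
  induction hx using AddSubgroup.closure_induction with
  | mem y hy =>
      obtain ⟨g, m, rfl⟩ := hy
      exact AddSubgroup.subset_closure ⟨g, r • m, by rw [smul_sub, smul_comm g r m]⟩
  | zero => simpa using zero_mem _
  | add x y hx' hy' hx hy => rw [smul_add]; exact add_mem hx hy
  | neg x hx' hx => rw [smul_neg]; exact neg_mem hx

private lemma card_left_aux {G M : Type*} [Group G] [Fintype G] [AddCommGroup M]
    [DistribMulAction G M] [DecidableEq M] {x y : M} (g1 : G) (h : g1 • x = y) :
    (univ.filter fun g : G => g • x = y).card
      = (univ.filter fun g : G => g • y = y).card := by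
  have hx : g1⁻¹ • y = x := by rw [← h, inv_smul_smul]
  apply Finset.card_nbij' (fun g => g * g1⁻¹) (fun g => g * g1)
  · intro g hg
    simp only [mem_coe, mem_filter, mem_univ, true_and] at hg ⊢
    rw [mul_smul, hx, hg]
  · intro g hg
    simp only [mem_coe, mem_filter, mem_univ, true_and] at hg ⊢
    rw [mul_smul, h, hg]
  · intro g _; simp [mul_assoc]
  · intro g _; simp [mul_assoc]

private lemma card_right_aux {G M : Type*} [Group G] [Fintype G] [AddCommGroup M]
    [DistribMulAction G M] [DecidableEq M] {x y : M} (g1 : G) (h : g1 • x = y) :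
    (univ.filter fun g : G => g • x = y).card
      = (univ.filter fun g : G => g • x = x).card := by
  have hx : g1⁻¹ • y = x := by rw [← h, inv_smul_smul]
  apply Finset.card_nbij' (fun g => g1⁻¹ * g) (fun g => g1 * g)
  · intro g hg
    simp only [mem_coe, mem_filter, mem_univ, true_and] at hg ⊢
    rw [mul_smul, hg, hx]
  · intro g hg
    simp only [mem_coe, mem_filter, mem_univ, true_and] at hg ⊢
    rw [mul_smul, hg, h]
  · intro g _; simp [← mul_assoc]
  · intro g _; simp [← mul_assoc]

/-- Let a finite group `G` act `R`-linearly on a free `R`-module `M`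
(`R` a commutative ring with no `|G|`-torsion) admitting a basis permuted by `G`
(a permutation module). Then `Ĥ⁻¹(G, M) = Ker(Nr)/⟨g·a - a⟩` vanishes, where
`Nr(a) = ∑_{g ∈ G} g·a`: every element of the kernel of the norm map lies in the
subgroup generated by the elements `g·a - a`. -/
theorem tateCohomology_neg_one_of_permutation_module
    {R M ι G : Type*} [CommRing R] [AddCommGroup M] [Module R M]
    [Group G] [Fintype G] [DistribMulAction G M] [SMulCommClass G R M]
    (htor : ∀ r : R, (Nat.card G : R) * r = 0 → r = 0)
    (b : Module.Basis ι R M) (hb : ∀ (g : G) (i : ι), ∃ j : ι, g • b i = b j) :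
    ∀ a : M, (∑ g : G, g • a) = 0 →
      a ∈ AddSubgroup.closure {x : M | ∃ (g : G) (m : M), x = g • m - m} := by
  classical
  intro a ha
  rcases subsingleton_or_nontrivial R with hR | hR
  · have : a = 0 := by
      rw [← one_smul R a, Subsingleton.elim (1 : R) (0 : R), zero_smul]
    rw [this]
    exact zero_mem _
  choose f hf using hb
  set c : ι →₀ R := b.repr a with hc
  have hsum : ∑ i ∈ c.support, c i • b i = a := by
    conv_rhs => rw [← b.linearCombination_repr a]
    rw [Finsupp.linearCombination_apply, Finsupp.sum]
  -- the relation "in the same orbit"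
  set rel : ι → ι → Prop := fun i j => ∃ g : G, g • b i = b j with hrel
  have hrefl : ∀ i, rel i i := fun i => ⟨1, one_smul _ _⟩
  have hsymm : ∀ {i j}, rel i j → rel j i := by
    rintro i j ⟨g, hg⟩
    exact ⟨g⁻¹, by rw [← hg, inv_smul_smul]⟩
  have htrans : ∀ {i j k}, rel i j → rel j k → rel i k := by
    rintro i j k ⟨g, hg⟩ ⟨g', hg'⟩
    exact ⟨g' * g, by rw [mul_smul, hg, hg']⟩
  -- the coefficient equation from the norm condition
  have hcoeff : ∀ q : ι,
      ∑ i ∈ c.support, ((univ.filter fun g : G => g • b i = b q).card : R) * c i = 0 := by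
    intro q
    have hga : ∀ g : G, g • a = ∑ i ∈ c.support, c i • b (f g i) := by
      intro g
      rw [← hsum, Finset.smul_sum]
      exact Finset.sum_congr rfl fun i _ => by rw [smul_comm, hf]
    have h0 : (b.repr (∑ g : G, g • a)) q = 0 := by rw [ha]; simp
    have h1 : (b.repr (∑ g : G, g • a)) q
        = ∑ g : G, ∑ i ∈ c.support, c i * (if f g i = q then (1 : R) else 0) := by
      rw [map_sum, Finsupp.finset_sum_apply]
      refine Finset.sum_congr rfl fun g _ => ?_
      rw [hga g, map_sum, Finsupp.finset_sum_apply]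
      refine Finset.sum_congr rfl fun i _ => ?_
      rw [map_smul, Finsupp.smul_apply, b.repr_self, Finsupp.single_apply, smul_eq_mul]
    rw [h1, Finset.sum_comm] at h0
    calc ∑ i ∈ c.support, ((univ.filter fun g : G => g • b i = b q).card : R) * c i
        = ∑ i ∈ c.support, ∑ g : G, c i * (if f g i = q then (1 : R) else 0) := by
          refine Finset.sum_congr rfl fun i _ => ?_
          have hfe : (univ.filter fun g : G => g • b i = b q)
              = (univ.filter fun g : G => f g i = q) := by
            ext g
            simp only [mem_filter, mem_univ, true_and]
            constructor
            · intro h; exact b.injective (by rw [← hf, h])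
            · intro h; rw [hf, h]
          rw [hfe, ← Finset.mul_sum, Finset.sum_boole]
          exact mul_comm _ _
      _ = 0 := h0
  -- the fiber sums vanish
  have key : ∀ q : ι, ∑ j ∈ c.support.filter (fun j => rel j q), c j = 0 := by
    intro q
    apply htor
    have hNqq : ((univ.filter fun g : G => g • b q = b q).card : R)
        * (∑ j ∈ c.support.filter (fun j => rel j q), c j) = 0 := by
      rw [Finset.mul_sum]
      have h3 := hcoeff q
      rw [← Finset.sum_filter_add_sum_filter_not c.support (fun j => rel j q)
        (fun i => ((univ.filter fun g : G => g • b i = b q).card : R) * c i)] at h3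
      have h2 : ∑ i ∈ c.support.filter (fun j => ¬ rel j q),
          ((univ.filter fun g : G => g • b i = b q).card : R) * c i = 0 := by
        refine Finset.sum_eq_zero fun i hi => ?_
        rw [mem_filter] at hi
        have : (univ.filter fun g : G => g • b i = b q) = ∅ := by
          refine Finset.filter_eq_empty_iff.mpr fun g _ hg => hi.2 ⟨g, hg⟩
        rw [this]; simp
      rw [h2, add_zero] at h3
      rw [← h3]
      refine Finset.sum_congr rfl fun i hi => ?_
      rw [mem_filter] at hi
      obtain ⟨g1, hg1⟩ := hi.2
      rw [card_left_aux g1 hg1]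
    -- orbit-stabilizer counting
    have hG : Fintype.card G = (univ.image (fun g : G => f g q)).card
        * (univ.filter fun g : G => g • b q = b q).card := by
      rw [← Finset.card_univ, Finset.card_eq_sum_card_image (fun g : G => f g q)]
      rw [Finset.sum_congr rfl (fun j hj => ?_), Finset.sum_const, smul_eq_mul]
      obtain ⟨g0, _, hg0⟩ := Finset.mem_image.mp hj
      have hfil : (univ.filter fun g : G => f g q = j)
          = (univ.filter fun g : G => g • b q = b j) := by
        ext g
        simp only [mem_filter, mem_univ, true_and]
        constructor
        · intro h; rw [hf, h]
        · intro h; exact b.injective (by rw [← hf, h])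
      rw [hfil]
      exact card_right_aux g0 (by rw [hf, hg0])
    rw [Nat.card_eq_fintype_card, hG, Nat.cast_mul, mul_assoc, hNqq, mul_zero]
  -- choose orbit representatives
  set st : Setoid ι := ⟨rel, hrefl, fun h => hsymm h, fun h h' => htrans h h'⟩ with hst
  set rep : ι → ι := fun i => (Quotient.mk st i).out with hrep
  have hrep_rel : ∀ i, rel (rep i) i := by
    intro i
    have := Quotient.mk_out (s := st) i
    exact this
  have hrep_eq : ∀ {i j}, rel i j → rep i = rep j := by
    intro i j h
    simp only [hrep]
    rw [Quotient.sound (a := i) (b := j) h]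
  have hrep_idem : ∀ i, rep (rep i) = rep i := fun i => hrep_eq (hrep_rel i)
  -- a is congruent mod the closure to the sum over representatives
  have hmem : a - ∑ i ∈ c.support, c i • b (rep i)
      ∈ AddSubgroup.closure {x : M | ∃ (g : G) (m : M), x = g • m - m} := by
    rw [← hsum, ← Finset.sum_sub_distrib]
    refine sum_mem fun i _ => ?_
    rw [← smul_sub]
    refine smul_mem_closure_aux _ ?_
    obtain ⟨g, hg⟩ := hrep_rel i
    exact AddSubgroup.subset_closure ⟨g, b (rep i), by rw [hg]⟩
  -- and that sum vanishes
  have hzero : ∑ i ∈ c.support, c i • b (rep i) = 0 := by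
    rw [← Finset.sum_fiberwise_of_maps_to (g := rep) (t := c.support.image rep)
      (fun i hi => Finset.mem_image_of_mem rep hi) (fun i => c i • b (rep i))]
    refine Finset.sum_eq_zero fun q hq => ?_
    obtain ⟨i0, _, hi0⟩ := Finset.mem_image.mp hq
    have hiff : ∀ i, rep i = q ↔ rel i q := by
      intro i
      constructor
      · intro h
        rw [← h]
        exact hsymm (hrep_rel i)
      · intro h
        rw [hrep_eq h, ← hi0, hrep_idem]
    calc ∑ i ∈ c.support.filter (fun i => rep i = q), c i • b (rep i)
        = ∑ i ∈ c.support.filter (fun i => rel i q), c i • b q := by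
          refine Finset.sum_congr (by ext i; simp [hiff i]) fun i hi => ?_
          rw [(mem_filter.mp hi).2 |> (hiff i).mpr]
      _ = (∑ i ∈ c.support.filter (fun i => rel i q), c i) • b q := by
          rw [Finset.sum_smul]
      _ = 0 := by rw [key q, zero_smul]
  rw [hzero, sub_zero] at hmem
  exact hmem
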